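/- For every word-representable graph G and every n ≥ 2, l(G ∘ K_n) ≤ n·l(G) + (n−1)·κ_G, where l is minimum word-representant length, κ_G is the maximum clique size of G, and G ∘ K_n is the rooted product of G with K_n rooted at a fixed vertex. -/

import Mathlib

open SimpleGraph

variable {V : Type*}

/-- Two distinct letters `x` and `y` alternate in a word `w` if the subsequence of `w`
consisting of all occurrences of `x` and `y` is strictly alternating. -/
def Alternates [DecidableEq V] (x y : V) (w : List V) : Prop :=
  (w.filter (fun z => decide (z = x ∨ z = y))).Chain' (· ≠ ·)

/-- A word `w` represents the graph `G` if it contains every vertex at least once and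
two distinct vertices are adjacent iff they alternate in `w`. -/
def Represents [DecidableEq V] (G : SimpleGraph V) (w : List V) : Prop :=
  (∀ v : V, v ∈ w) ∧ ∀ x y : V, x ≠ y → (G.Adj x y ↔ Alternates x y w)

/-- A graph is word-representable if some word represents it. -/
def WordRepresentable [DecidableEq V] (G : SimpleGraph V) : Prop :=
  ∃ w : List V, Represents G w

/-- `l(G)`: the minimum length of a word-representant of `G`. -/
noncomputable def reprLen [DecidableEq V] (G : SimpleGraph V) : ℕ :=
  sInf {n | ∃ w : List V, Represents G w ∧ w.length = n}

/-- The rooted product `G ∘ H` with root `r : U`: copies of `H` indexed by `V(G)`,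
with each vertex `u` of `G` identified with the root of the `u`-th copy. -/
def rootedProd {U : Type*} (G : SimpleGraph V) (H : SimpleGraph U) (r : U) :
    SimpleGraph (V × U) where
  Adj p q := (p.1 = q.1 ∧ H.Adj p.2 q.2) ∨ (p.2 = r ∧ q.2 = r ∧ G.Adj p.1 q.1)
  symm := by
    constructor
    intro p q h
    rcases h with ⟨h1, h2⟩ | ⟨h1, h2, h3⟩
    · exact Or.inl ⟨h1.symm, h2.symm⟩
    · exact Or.inr ⟨h2, h1, h3.symm⟩
  loopless := by
    constructor
    intro p h
    rcases h with ⟨_, h2⟩ | ⟨_, _, h3⟩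
    · exact h2.ne rfl
    · exact h3.ne rfl

/-! Take a shortest word `w` representing `G` and let `X` list the non-root vertices of `K_n`.
Replace each occurrence of a letter `v` by a block over the copy `{v} × K_n`: the last occurrence
by `X r X`, the first one (unless it is also the last) by `r`, and all others by `X r`. The copy
of `v` then reads `(r X)^k`, or `X r X` if `k = 1`, so its vertices alternate pairwise; the roots
alternate exactly as the letters of `w` do; and the contiguous block `X r X` puts two occurrences
of each non-root vertex of copy `v` next to each other, so it alternates with nothing outside its
copy. A letter occurring `k ≥ 2` times costs `k n` letters and one occurring once costs
`n + (n - 1)`; the letters occurring once in `w` alternate pairwise, so they form a clique. -/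

section Alternation

variable [DecidableEq V] {x y : V} {w : List V}

theorem alternates_iff :
    Alternates x y w ↔ (w.filter fun z => decide (z = x ∨ z = y)).IsChain (· ≠ ·) :=
  Iff.rfl

theorem alternates_comm : Alternates x y w ↔ Alternates y x w := by
  simp only [alternates_iff, or_comm]

theorem Alternates.of_infix {w' : List V} (h : Alternates x y w) (hw : w' <:+: w) :
    Alternates x y w' :=
  List.IsChain.infix h (hw.filter _)

theorem alternates_filter_iff {p : V → Bool} (hx : p x) (hy : p y) :
    Alternates x y (w.filter p) ↔ Alternates x y w := by
  rw [alternates_iff, alternates_iff, List.filter_filter]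
  refine iff_of_eq (congrArg _ (List.filter_congr fun z _ => ?_))
  by_cases hzx : z = x <;> by_cases hzy : z = y <;> simp_all

theorem alternates_map_iff {U : Type*} [DecidableEq U] {f : V → U} (hf : f.Injective) :
    Alternates (f x) (f y) (w.map f) ↔ Alternates x y w := by
  simp only [alternates_iff, List.filter_map, List.isChain_map, Function.comp_def, hf.eq_iff,
    hf.ne_iff]

theorem not_alternates_of_two_le_count (hy : y ∉ w) (hx : 2 ≤ w.count x) :
    ¬ Alternates x y w := by
  have hfilter :
      w.filter (fun z => decide (z = x ∨ z = y)) = w.filter (fun z => decide (z = x)) :=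
    List.filter_congr fun z hz => by simp [show z ≠ y from fun h => hy (h ▸ hz)]
  obtain ⟨k, hk⟩ : ∃ k, w.count x = k + 2 := ⟨_, (Nat.sub_add_cancel hx).symm⟩
  rw [alternates_iff, hfilter, List.filter_eq, hk]
  simp [List.replicate_succ, List.isChain_cons_cons]

theorem alternates_of_count_eq_one (hx : w.count x = 1) (hy : w.count y = 1) :
    Alternates x y w := by
  refine List.Pairwise.isChain (List.nodup_iff_count_le_one.2 fun z => ?_)
  by_cases hz : z = x ∨ z = y
  · rw [List.count_filter (by simpa using hz)]
    rcases hz with rfl | rfl <;> simp [*]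
  · rw [List.count_eq_zero.2 fun hmem => hz (by simpa using (List.mem_filter.1 hmem).2)]
    exact zero_le_one

theorem alternates_flatten_replicate {L : List V} (hL : L.Nodup) (hx : x ∈ L) (hy : y ∈ L)
    (hxy : x ≠ y) (m : ℕ) : Alternates x y (List.replicate m L).flatten := by
  have hperm : (L.filter fun z => decide (z = x ∨ z = y)).Perm [x, y] :=
    (List.perm_ext_iff_of_nodup (hL.filter _) (by simpa using hxy)).2 fun z => by
      by_cases hzx : z = x <;> by_cases hzy : z = y <;> simp_all
  obtain ⟨a, b, hab⟩ := List.length_eq_two.1 hperm.length_eq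
  have hne : a ≠ b := by
    have := hL.filter (fun z => decide (z = x ∨ z = y))
    rw [hab] at this
    simpa using this
  rw [alternates_iff, List.filter_flatten, List.map_replicate, hab, List.isChain_flatten (by simp)]
  refine ⟨by simp [hne], List.isChain_replicate_of_rel _ ?_⟩
  simpa using hne.symm

theorem Represents.isClique_setOf_count_eq_one {G : SimpleGraph V} (hw : Represents G w) :
    G.IsClique {v | w.count v = 1} :=
  fun _ hx _ hy hxy => (hw.2 _ _ hxy).2 (alternates_of_count_eq_one hx hy)

end Alternation

section Expansion

variable {n : ℕ} (r : Fin n)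

def nonRoots : List (Fin n) := (List.finRange n).erase r

variable {r}

theorem mem_nonRoots {a : Fin n} : a ∈ nonRoots r ↔ a ≠ r := by
  simp [nonRoots, (List.nodup_finRange n).mem_erase_iff]

theorem nodup_nonRoots : (nonRoots r).Nodup :=
  (List.nodup_finRange n).erase r

theorem nodup_cons_nonRoots : (r :: nonRoots r).Nodup :=
  List.nodup_cons.2 ⟨by simp [mem_nonRoots], nodup_nonRoots⟩

theorem mem_cons_nonRoots (a : Fin n) : a ∈ r :: nonRoots r := by
  by_cases ha : a = r <;> simp [ha, mem_nonRoots]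

theorem length_nonRoots : (nonRoots r).length = n - 1 := by
  simp [nonRoots, List.length_erase_of_mem]

variable (r) [DecidableEq V]

def expandWord : List V → List V → List (V × Fin n)
  | _, [] => []
  | pre, v :: t =>
      (if v ∈ t then (if v ∈ pre then nonRoots r ++ [r] else [r])
        else nonRoots r ++ r :: nonRoots r).map (v, ·) ++ expandWord (v :: pre) t

variable {r}

theorem filter_snd_expandWord (pre w : List V) :
    (expandWord r pre w).filter (fun p => p.2 = r) = w.map (·, r) := by
  induction w generalizing pre with
  | nil => rfl
  | cons v t ih =>
    have hX : (nonRoots r).filter (fun a => a = r) = [] := by simp [mem_nonRoots]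
    simp only [expandWord, List.filter_append, List.filter_map, ih, List.map_cons]
    split_ifs <;> simp [Function.comp_def, hX]

theorem filter_fst_expandWord_of_mem {v : V} {pre : List V} (hv : v ∈ pre) (w : List V) :
    (expandWord r pre w).filter (fun p => p.1 = v) =
      (if v ∈ w then nonRoots r ++ (List.replicate (w.count v) (r :: nonRoots r)).flatten
        else []).map (v, ·) := by
  induction w generalizing pre with
  | nil => simp [expandWord]
  | cons u t ih =>
    simp only [expandWord, List.filter_append, List.filter_map, ih (List.mem_cons_of_mem u hv)]
    by_cases huv : u = v
    · subst huv
      by_cases hut : u ∈ t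
      · simp [hut, hv, Function.comp_def, List.replicate_succ]
      · simp [hut, Function.comp_def, List.count_eq_zero.2 hut]
    · simp [huv, Function.comp_def, Ne.symm huv]

theorem filter_fst_expandWord_of_not_mem {v : V} {pre : List V} (hv : v ∉ pre) (w : List V) :
    (expandWord r pre w).filter (fun p => p.1 = v) =
      (if w.count v = 1 then nonRoots r ++ r :: nonRoots r
        else (List.replicate (w.count v) (r :: nonRoots r)).flatten).map (v, ·) := by
  induction w generalizing pre with
  | nil => simp [expandWord]
  | cons u t ih =>
    simp only [expandWord, List.filter_append, List.filter_map]
    by_cases huv : u = v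
    · subst huv
      rw [filter_fst_expandWord_of_mem List.mem_cons_self]
      by_cases hut : u ∈ t
      · simp [hut, hv, Function.comp_def, List.replicate_succ, List.count_eq_zero]
      · simp [hut, Function.comp_def, List.count_eq_zero.2 hut]
    · rw [ih (by simpa [Ne.symm huv] using hv)]
      simp [huv, Function.comp_def]

theorem infix_expandWord {v : V} {w : List V} (hv : v ∈ w) (pre : List V) :
    (nonRoots r ++ r :: nonRoots r).map (v, ·) <:+: expandWord r pre w := by
  induction w generalizing pre with
  | nil => simp at hv
  | cons u t ih =>
    by_cases hvt : v ∈ t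
    · exact (ih hvt (u :: pre)).trans (List.suffix_append _ _).isInfix
    · obtain rfl : v = u := by simpa [hvt] using hv
      rw [expandWord, if_neg hvt]
      exact (List.prefix_append _ _).isInfix

theorem mem_expandWord {v : V} {w : List V} (hv : v ∈ w) (pre : List V) (a : Fin n) :
    (v, a) ∈ expandWord r pre w :=
  (infix_expandWord hv pre).subset <| by by_cases ha : a = r <;> simp [ha, mem_nonRoots]

theorem alternates_expandWord_same_copy {v : V} {w : List V} {a b : Fin n} (hab : a ≠ b) :
    Alternates (v, a) (v, b) (expandWord r [] w) := by
  rw [← alternates_filter_iff (p := fun p => p.1 = v) (by simp) (by simp),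
    filter_fst_expandWord_of_not_mem List.not_mem_nil,
    alternates_map_iff (Prod.mk_right_injective v)]
  refine (alternates_flatten_replicate (nodup_cons_nonRoots (r := r)) (mem_cons_nonRoots a)
    (mem_cons_nonRoots b) hab (w.count v + 1)).of_infix ?_
  split_ifs with hv
  · exact ⟨[r], [], by simp [hv, List.replicate_succ]⟩
  · exact ⟨[], r :: nonRoots r, by simp [List.replicate_succ']⟩

theorem alternates_expandWord_roots_iff {u v : V} {w : List V} :
    Alternates (u, r) (v, r) (expandWord r [] w) ↔ Alternates u v w := by
  rw [← alternates_filter_iff (p := fun p => p.2 = r) (by simp) (by simp),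
    filter_snd_expandWord, alternates_map_iff (Prod.mk_left_injective r)]

theorem not_alternates_expandWord {u v : V} {w : List V} (huv : u ≠ v) (hu : u ∈ w)
    {a : Fin n} (ha : a ≠ r) (b : Fin n) :
    ¬ Alternates (u, a) (v, b) (expandWord r [] w) := by
  intro halt
  refine not_alternates_of_two_le_count (by simp [huv, Ne.symm huv]) (le_of_eq ?_)
    (halt.of_infix (infix_expandWord hu []))
  simp [List.count_map_of_injective _ _ (Prod.mk_right_injective u),
    List.count_eq_one_of_mem nodup_nonRoots (mem_nonRoots.2 ha), Ne.symm ha]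

theorem represents_expandWord {G : SimpleGraph V} {w : List V} (hw : Represents G w) :
    Represents (rootedProd G ⊤ r) (expandWord r [] w) := by
  refine ⟨fun p => mem_expandWord (hw.1 p.1) [] p.2, ?_⟩
  rintro ⟨u, a⟩ ⟨v, b⟩ hne
  by_cases huv : u = v
  · subst huv
    have hab : a ≠ b := fun h => hne (h ▸ rfl)
    simp [rootedProd, hab, alternates_expandWord_same_copy hab]
  by_cases ha : a = r <;> by_cases hb : b = r
  · subst ha hb
    simpa [rootedProd, huv] using (hw.2 u v huv).trans alternates_expandWord_roots_iff.symm
  · simpa [rootedProd, huv, hb] using fun h =>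
      not_alternates_expandWord (Ne.symm huv) (hw.1 v) hb a (alternates_comm.1 h)
  all_goals simpa [rootedProd, huv, ha] using not_alternates_expandWord huv (hw.1 u) ha b

theorem length_expandWord [Fintype V] (w : List V) :
    (expandWord r [] w).length =
      n * w.length + (n - 1) * (Finset.univ.filter fun v => w.count v = 1).card := by
  have hsum : ∀ l : List V, ∑ v, l.count v = l.length := fun l => by
    simpa using Multiset.sum_count_eq_card (s := Finset.univ) (m := (l : Multiset V)) (by simp)
  have hcopy : ∀ v, ((expandWord r [] w).map Prod.fst).count v =
      n * w.count v + if w.count v = 1 then n - 1 else 0 := fun v => by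
    have hn : n - 1 + 1 = n := Nat.sub_add_cancel r.pos
    rw [List.count_eq_countP, List.countP_map, List.countP_eq_length_filter]
    simp only [Function.comp_def, beq_eq_decide]
    rw [filter_fst_expandWord_of_not_mem List.not_mem_nil, List.length_map]
    split_ifs with h
    · simp only [List.length_append, List.length_cons, length_nonRoots, h]
      omega
    · simp [length_nonRoots, hn, Nat.mul_comm]
  rw [← List.length_map (f := Prod.fst), ← hsum, Finset.sum_congr rfl fun v _ => hcopy v,
    Finset.sum_add_distrib, ← Finset.mul_sum, hsum, Finset.sum_ite, Finset.sum_const_zero,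
    Finset.sum_const, smul_eq_mul, mul_comm (Finset.card _)]
  rfl

end Expansion

theorem stmt18_general [Fintype V] [DecidableEq V] (G : SimpleGraph V)
    (h : WordRepresentable G) (n : ℕ) (r : Fin n) :
    reprLen (rootedProd G (⊤ : SimpleGraph (Fin n)) r)
      ≤ n * reprLen G + (n - 1) * G.cliqueNum := by
  obtain ⟨w, hw, hlen⟩ : reprLen G ∈ {m | ∃ w : List V, Represents G w ∧ w.length = m} :=
    Nat.sInf_mem (h.elim fun w hw => ⟨w.length, w, hw, rfl⟩)
  have hclique : G.IsClique (Finset.univ.filter fun v => w.count v = 1 : Finset V) := by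
    simpa using hw.isClique_setOf_count_eq_one
  calc reprLen (rootedProd G ⊤ r) ≤ (expandWord r [] w).length :=
        Nat.sInf_le ⟨_, represents_expandWord hw, rfl⟩
    _ = n * reprLen G + (n - 1) * (Finset.univ.filter fun v => w.count v = 1).card := by
        rw [length_expandWord, hlen]
    _ ≤ n * reprLen G + (n - 1) * G.cliqueNum := by
        gcongr
        exact hclique.card_le_cliqueNum

theorem stmt18 [Fintype V] [DecidableEq V] (G : SimpleGraph V)
    (h : WordRepresentable G) (n : ℕ) (hn : 2 ≤ n) (r : Fin n) :
    reprLen (rootedProd G (⊤ : SimpleGraph (Fin n)) r)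
      ≤ n * reprLen G + (n - 1) * G.cliqueNum :=
  stmt18_general G h n r
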